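/- If λ = (λ₁,...,λₙ) ∈ Γ₂ with λ₁ ≥ λ₂ ≥ ... ≥ λₙ, then 0 ≤ σ₂^{11}(λ) ≤ (n−2)λ₂ + λₙ, and consequently −λⱼ ≤ (n−2)λ₂ for every j. -/
import Mathlib


open Finset

noncomputable def s1 {n : ℕ} (x : Fin n → ℝ) : ℝ := ∑ i, x i

noncomputable def s2 {n : ℕ} (x : Fin n → ℝ) : ℝ :=
  ((∑ i, x i) ^ 2 - ∑ i, (x i) ^ 2) / 2

noncomputable def s3 {n : ℕ} (x : Fin n → ℝ) : ℝ :=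
  ((∑ i, x i) ^ 3 - 3 * (∑ i, x i) * (∑ i, (x i) ^ 2) + 2 * ∑ i, (x i) ^ 3) / 6

def Gamma2 {n : ℕ} : Set (Fin n → ℝ) := {x | 0 < s1 x ∧ 0 < s2 x}

def Gamma3 {n : ℕ} : Set (Fin n → ℝ) := {x | 0 < s1 x ∧ 0 < s2 x ∧ 0 < s3 x}

theorem stmt_6 (n : ℕ) (hn : 2 ≤ n) (l : Fin n → ℝ)
    (hsort : ∀ i j : Fin n, i ≤ j → l j ≤ l i) (hG : l ∈ Gamma2) :
    0 ≤ s1 l - l ⟨0, by omega⟩ ∧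
      s1 l - l ⟨0, by omega⟩ ≤ ((n : ℝ) - 2) * l ⟨1, by omega⟩ + l ⟨n - 1, by omega⟩ ∧
      ∀ j : Fin n, -l j ≤ ((n : ℝ) - 2) * l ⟨1, by omega⟩ := by
  obtain ⟨h1, h2⟩ := hG
  set a : Fin n := ⟨0, by omega⟩ with ha_def
  set b : Fin n := ⟨1, by omega⟩ with hb_def
  set c : Fin n := ⟨n - 1, by omega⟩ with hc_def
  have hmax : ∀ i, l i ≤ l a := fun i => hsort a i (by simp [ha_def, Fin.le_def])
  -- Part 1
  have key : 0 ≤ s1 l - l a := by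
    by_contra h
    push_neg at h
    have hlt : s1 l < l a := by linarith
    have hsq : (s1 l) ^ 2 < (l a) ^ 2 := by nlinarith
    have hsum : (l a) ^ 2 ≤ ∑ i, (l i) ^ 2 :=
      Finset.single_le_sum (fun i _ => sq_nonneg (l i)) (mem_univ a)
    have : s2 l < 0 := by
      unfold s2; unfold s1 at hsq h1; nlinarith
    linarith
  -- Part 2
  have hac : c ≠ a := by
    simp only [ha_def, hc_def, ne_eq, Fin.mk.injEq]
    omega
  have hc : c ∈ univ.erase a := Finset.mem_erase.mpr ⟨hac, mem_univ c⟩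
  have e1 : s1 l - l a = l c + ∑ i ∈ (univ.erase a).erase c, l i := by
    rw [s1, ← Finset.sum_erase_add _ _ (mem_univ a),
      ← Finset.sum_erase_add _ _ hc]
    ring
  have hcard : ((univ.erase a).erase c).card = n - 2 := by
    rw [Finset.card_erase_of_mem hc, Finset.card_erase_of_mem (mem_univ a),
      Finset.card_univ, Fintype.card_fin]
    omega
  have hb : ∀ i ∈ (univ.erase a).erase c, l i ≤ l b := by
    intro i hi
    have hia : i ≠ a := (Finset.mem_erase.mp (Finset.mem_erase.mp hi).2).1
    apply hsort b i
    rw [Fin.le_def]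
    have : i.val ≠ 0 := fun h => hia (by simp [ha_def, Fin.ext_iff, h])
    simp only [hb_def]
    omega
  have hbound : ∑ i ∈ (univ.erase a).erase c, l i ≤ ((n : ℝ) - 2) * l b := by
    calc ∑ i ∈ (univ.erase a).erase c, l i
        ≤ ∑ _i ∈ (univ.erase a).erase c, l b := Finset.sum_le_sum hb
      _ = ((n : ℝ) - 2) * l b := by
          rw [Finset.sum_const, hcard, nsmul_eq_mul]
          congr 1
          push_cast [Nat.cast_sub hn]
          ring
  have part2 : s1 l - l a ≤ ((n : ℝ) - 2) * l b + l c := by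
    rw [e1]; linarith
  refine ⟨key, part2, ?_⟩
  intro j
  have hjc : l c ≤ l j := hsort j c (by rw [Fin.le_def]; simp only [hc_def]; omega)
  linarith
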